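/- The iterated integral ∫₀¹ ( ∫_u^{(1+u)/2} (1/r)·log((1+u)/r − 1) dr ) du equals π²/12. -/

import Mathlib

/-!
The substitution `r = (1 + u) v / (1 + v)` turns the inner integral into
`P u = ∫_u^1 -log v / (v (1 + v)) dv`. Integrating by parts, using `u P u → 0` as `u → 0⁺`,
`∫_0^1 P = ∫_0^1 -log v / (1 + v) dv`. Expanding `1 / (1 + v)` as a geometric series and using
`∫_0^1 vⁿ (-log v) dv = 1 / (n + 1)²` gives `∑ (-1)ⁿ / (n + 1)² = π² / 12`.
-/

open Real MeasureTheory intervalIntegral Set Filter Topology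

lemma hasSum_one_div_nat_add_one_sq :
    HasSum (fun n : ℕ => 1 / ((n : ℝ) + 1) ^ 2) (π ^ 2 / 6) := by
  simpa using (hasSum_nat_add_iff' 1).2 hasSum_zeta_two

lemma hasSum_neg_one_pow_div_nat_add_one_sq :
    HasSum (fun n : ℕ => (-1) ^ n / ((n : ℝ) + 1) ^ 2) (π ^ 2 / 12) := by
  -- `f n` is `2 / (n + 1) ^ 2` for odd `n` and `0` for even `n`
  set f : ℕ → ℝ := fun n => (1 - (-1) ^ n) / ((n : ℝ) + 1) ^ 2
  have heven : HasSum (fun k => f (2 * k)) 0 := by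
    simp [f, pow_mul]
  have hodd : HasSum (fun k => f (2 * k + 1)) (π ^ 2 / 12) := by
    rw [show π ^ 2 / 12 = 1 / 2 * (π ^ 2 / 6) by ring]
    refine (hasSum_one_div_nat_add_one_sq.mul_left _).congr_fun fun k => ?_
    simp only [f, pow_succ, pow_mul]
    push_cast
    field_simp
    ring
  have := hasSum_one_div_nat_add_one_sq.sub (heven.even_add_odd hodd)
  rw [show π ^ 2 / 6 - (0 + π ^ 2 / 12) = π ^ 2 / 12 by ring] at this
  exact this.congr_fun fun n => by simp only [f]; ring

lemma intervalIntegrable_mul_neg_log {g : ℝ → ℝ} {a b : ℝ} (hg : ContinuousOn g (uIcc a b)) :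
    IntervalIntegrable (fun v => g v * -log v) volume a b :=
  intervalIntegrable_log'.neg.continuousOn_mul hg

lemma integral_pow_mul_neg_log (n : ℕ) :
    ∫ v in (0 : ℝ)..1, v ^ n * -log v = 1 / ((n : ℝ) + 1) ^ 2 := by
  have hn : (n : ℝ) + 1 ≠ 0 := by positivity
  -- `F v = v ^ (n + 1) * (1 / (n + 1) ^ 2 - log v / (n + 1))`, written so that its continuity
  -- at `0` is that of `v * log v`
  let F : ℝ → ℝ := fun v => v ^ n * (v / ((n : ℝ) + 1) ^ 2 - v * log v / ((n : ℝ) + 1))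
  have hF : ∀ v ∈ Ioo (0 : ℝ) 1, HasDerivAt F (v ^ n * -log v) v := by
    intro v hv
    have hF_eq : F = fun w => w ^ (n + 1) * (1 / ((n : ℝ) + 1) ^ 2 - log w / ((n : ℝ) + 1)) := by
      ext w; simp only [F]; ring
    rw [hF_eq]
    refine ((hasDerivAt_pow (n + 1) v).mul
      (((hasDerivAt_log hv.1.ne').div_const _).const_sub _)).congr_deriv ?_
    have hv0 : v ≠ 0 := hv.1.ne'
    rw [add_tsub_cancel_right, pow_succ]
    push_cast
    field_simp
    ring
  have := integral_eq_sub_of_hasDerivAt_of_le zero_le_one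
    (by fun_prop (disch := skip) : ContinuousOn F (Icc 0 1)) hF
    (intervalIntegrable_mul_neg_log (continuousOn_pow n))
  simpa [F] using this

lemma hasSum_geometric_neg_mul_neg_log {v : ℝ} (hv : v ∈ Ioc (0 : ℝ) 1) :
    HasSum (fun n : ℕ => (-v) ^ n * -log v) (-log v / (1 + v)) := by
  rcases hv.2.lt_or_eq with hv1 | rfl
  · have hv_abs : |-v| < 1 := by rw [abs_neg, abs_of_pos hv.1]; exact hv1
    rw [show -log v / (1 + v) = (1 - -v)⁻¹ * -log v by ring]
    exact (hasSum_geometric_of_abs_lt_one hv_abs).mul_right _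
  · simp

lemma integral_neg_log_div_one_add : ∫ v in (0 : ℝ)..1, -log v / (1 + v) = π ^ 2 / 12 := by
  let F : ℕ → ℝ → ℝ := fun n v => (-v) ^ n * -log v
  have hF_int (n : ℕ) : IntegrableOn (F n) (Ioc 0 1) :=
    (intervalIntegrable_iff_integrableOn_Ioc_of_le zero_le_one).1
      (intervalIntegrable_mul_neg_log (by fun_prop))
  have hF_norm (n : ℕ) : ∫ v in Ioc 0 1, ‖F n v‖ = 1 / ((n : ℝ) + 1) ^ 2 := by
    rw [← integral_pow_mul_neg_log n, integral_of_le zero_le_one]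
    refine setIntegral_congr_fun measurableSet_Ioc fun v hv => ?_
    have hlog : 0 ≤ -log v := neg_nonneg.2 (log_nonpos hv.1.le hv.2)
    simp only [F, norm_mul, norm_pow, norm_neg, Real.norm_of_nonneg hv.1.le,
      Real.norm_of_nonneg hlog]
  have hF_integral (n : ℕ) : ∫ v in Ioc 0 1, F n v = (-1) ^ n / ((n : ℝ) + 1) ^ 2 := by
    rw [div_eq_mul_one_div, ← integral_pow_mul_neg_log n, ← intervalIntegral.integral_const_mul,
      integral_of_le zero_le_one]
    refine setIntegral_congr_fun measurableSet_Ioc fun v _ => ?_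
    simp only [F, neg_pow v]
    ring
  have hsum := hasSum_integral_of_summable_integral_norm hF_int
    (hasSum_one_div_nat_add_one_sq.summable.congr fun n => (hF_norm n).symm)
  rw [setIntegral_congr_fun measurableSet_Ioc
    fun v hv => (hasSum_geometric_neg_mul_neg_log hv).tsum_eq] at hsum
  rw [integral_of_le zero_le_one]
  exact hsum.unique (hasSum_neg_one_pow_div_nat_add_one_sq.congr_fun hF_integral)

lemma tendsto_mul_log_sq_nhdsGT_zero : Tendsto (fun x => x * log x ^ 2) (𝓝[>] 0) (𝓝 0) := by
  have h := (tendsto_log_mul_rpow_nhdsGT_zero one_half_pos).pow 2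
  rw [zero_pow two_ne_zero] at h
  refine h.congr' (eventually_mem_nhdsWithin.mono fun x (hx : 0 < x) => ?_)
  rw [mul_pow, ← sqrt_eq_rpow, sq_sqrt hx.le, mul_comm]

namespace PiSqDivTwelve

noncomputable def kernel (v : ℝ) : ℝ := -log v / (v * (1 + v))

lemma integral_log_div_sub_one_eq_integral_kernel {u : ℝ} (hu : 0 < u) :
    ∫ r in u..((1 + u) / 2), 1 / r * log ((1 + u) / r - 1) = ∫ v in u..1, kernel v := by
  -- the substitution `r = φ v` sends `(1 + u) / r - 1` to `1 / v`
  let φ : ℝ → ℝ := fun v => (1 + u) * v / (1 + v)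
  let g : ℝ → ℝ := fun r => 1 / r * log ((1 + u) / r - 1)
  have hpos : ∀ v ∈ uIcc u 1, 0 < v := fun v hv => (lt_min hu one_pos).trans_le hv.1
  have hφ_pos : ∀ v, 0 < v → 0 < φ v := fun v hv => by positivity
  have hφ_sub : ∀ v, 0 < v → (1 + u) / φ v - 1 = 1 / v := fun v hv => by
    simp only [φ]; field_simp; ring
  have hφ_deriv : ∀ v ∈ uIcc u 1, HasDerivAt φ ((1 + u) / (1 + v) ^ 2) v := by
    intro v hv
    have h1v : 1 + v ≠ 0 := (add_pos one_pos (hpos v hv)).ne'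
    refine (((hasDerivAt_id v).const_mul (1 + u)).div ((hasDerivAt_id v).const_add 1) h1v)
      |>.congr_deriv ?_
    simp only [id]; field_simp; ring
  have hg : ContinuousOn g (φ '' uIcc u 1) := by
    rintro _ ⟨v, hv, rfl⟩
    have hφv := (hφ_pos v (hpos v hv)).ne'
    have hlog : (1 + u) / φ v - 1 ≠ 0 := by
      rw [hφ_sub v (hpos v hv)]; exact one_div_ne_zero (hpos v hv).ne'
    exact ContinuousAt.continuousWithinAt (by fun_prop (disch := assumption))
  have hsub := integral_comp_mul_deriv' hφ_deriv
    (fun v hv => have := hpos v hv; (by fun_prop (disch := positivity) :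
      ContinuousAt (fun v : ℝ => (1 + u) / (1 + v) ^ 2) v).continuousWithinAt) hg
  have hφu : φ u = u := by simp only [φ]; field_simp
  have hφ1 : φ 1 = (1 + u) / 2 := by norm_num [φ]
  rw [hφu, hφ1] at hsub
  rw [← hsub]
  refine integral_congr fun v hv => ?_
  have hv0 := hpos v hv
  simp only [Function.comp, g, hφ_sub v hv0, one_div, log_inv, kernel, φ]
  field_simp

noncomputable def tail (u : ℝ) : ℝ := ∫ v in u..1, kernel v

noncomputable def tailPrimitive (u : ℝ) : ℝ := u * tail u + ∫ v in (0 : ℝ)..u, -log v / (1 + v)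

lemma continuousAt_kernel {v : ℝ} (hv : 0 < v) : ContinuousAt kernel v := by
  unfold kernel
  fun_prop (disch := positivity)

lemma kernel_nonneg {v : ℝ} (hv0 : 0 < v) (hv1 : v ≤ 1) : 0 ≤ kernel v :=
  div_nonneg (neg_nonneg.2 (log_nonpos hv0.le hv1)) (by positivity)

lemma intervalIntegrable_kernel {a b : ℝ} (ha : 0 < a) (hb : 0 < b) :
    IntervalIntegrable kernel volume a b :=
  ContinuousOn.intervalIntegrable fun _ hv =>
    (continuousAt_kernel ((lt_min ha hb).trans_le hv.1)).continuousWithinAt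

lemma hasDerivAt_tail {u : ℝ} (hu : 0 < u) : HasDerivAt tail (-kernel u) u :=
  integral_hasDerivAt_left (intervalIntegrable_kernel hu one_pos)
    (by unfold kernel; fun_prop : Measurable kernel).stronglyMeasurable.stronglyMeasurableAtFilter
    (continuousAt_kernel hu)

lemma tail_nonneg {u : ℝ} (hu0 : 0 < u) (hu1 : u ≤ 1) : 0 ≤ tail u :=
  integral_nonneg hu1 fun _ hv => kernel_nonneg (hu0.trans_le hv.1) hv.2

lemma tail_le_log_sq {u : ℝ} (hu0 : 0 < u) (hu1 : u ≤ 1) : tail u ≤ log u ^ 2 := by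
  have hbound : ∀ v ∈ Icc u 1, kernel v ≤ -log u * v⁻¹ := by
    intro v hv
    have hv0 : 0 < v := hu0.trans_le hv.1
    have hlog : 0 ≤ -log v := neg_nonneg.2 (log_nonpos hv0.le hv.2)
    calc kernel v ≤ -log v / v :=
          div_le_div_of_nonneg_left hlog hv0 (by nlinarith)
      _ ≤ -log u * v⁻¹ := by
          rw [div_eq_mul_inv]
          gcongr
          exact hv.1
  have hinv : IntervalIntegrable (fun v => v⁻¹) volume u 1 :=
    intervalIntegrable_inv_iff.2 (.inr (notMem_uIcc_of_lt hu0 one_pos))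
  calc tail u ≤ ∫ v in u..1, -log u * v⁻¹ :=
        integral_mono_on hu1 (intervalIntegrable_kernel hu0 one_pos) (hinv.const_mul _) hbound
    _ = log u ^ 2 := by
        rw [intervalIntegral.integral_const_mul, integral_inv_of_pos hu0 one_pos, one_div, log_inv]
        ring

lemma tendsto_mul_tail : Tendsto (fun u => u * tail u) (𝓝[>] 0) (𝓝 0) := by
  refine tendsto_of_tendsto_of_tendsto_of_le_of_le' tendsto_const_nhds
    tendsto_mul_log_sq_nhdsGT_zero ?_ ?_ <;>
  filter_upwards [Ioc_mem_nhdsGT one_pos] with u hu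
  · exact mul_nonneg hu.1.le (tail_nonneg hu.1 hu.2)
  · exact mul_le_mul_of_nonneg_left (tail_le_log_sq hu.1 hu.2) hu.1.le

lemma continuousOn_mul_tail : ContinuousOn (fun u => u * tail u) (Icc 0 1) := by
  intro u hu
  rcases hu.1.eq_or_lt with rfl | hu0
  -- `tail 0` is a junk value, but it is multiplied by `0`
  · refine ContinuousWithinAt.mono ?_ Icc_subset_Ici_self
    rw [← continuousWithinAt_Ioi_iff_Ici, ContinuousWithinAt, zero_mul]
    exact tendsto_mul_tail
  · exact (continuousAt_id.mul (hasDerivAt_tail hu0).continuousAt).continuousWithinAt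

lemma intervalIntegrable_neg_log_div_one_add {a b : ℝ} (ha : 0 ≤ a) (hb : 0 ≤ b) :
    IntervalIntegrable (fun v => -log v / (1 + v)) volume a b := by
  simp only [div_eq_inv_mul]
  refine intervalIntegrable_mul_neg_log fun v hv => ?_
  have : 0 ≤ v := (le_min ha hb).trans hv.1
  exact ContinuousAt.continuousWithinAt (by fun_prop (disch := positivity))

lemma hasDerivAt_tailPrimitive {u : ℝ} (hu : 0 < u) : HasDerivAt tailPrimitive (tail u) u := by
  have hmeas : Measurable fun v => -log v / (1 + v) := by fun_prop
  have hq := integral_hasDerivAt_right (intervalIntegrable_neg_log_div_one_add le_rfl hu.le)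
    hmeas.stronglyMeasurable.stronglyMeasurableAtFilter
    (by fun_prop (disch := positivity) : ContinuousAt (fun v => -log v / (1 + v)) u)
  refine (((hasDerivAt_id u).mul (hasDerivAt_tail hu)).add hq).congr_deriv ?_
  simp only [id, kernel]
  field_simp
  ring

lemma integral_tail : ∫ u in (0 : ℝ)..1, tail u = π ^ 2 / 12 := by
  have hcont : ContinuousOn tailPrimitive (Icc 0 1) := by
    refine continuousOn_mul_tail.add ?_
    simpa only [uIcc_of_le zero_le_one] using continuousOn_primitive_interval'
      (intervalIntegrable_neg_log_div_one_add le_rfl zero_le_one) left_mem_uIcc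
  have hderiv : ∀ u ∈ Ioo (0 : ℝ) 1, HasDerivAt tailPrimitive (tail u) u :=
    fun u hu => hasDerivAt_tailPrimitive hu.1
  have hint : IntervalIntegrable tail volume 0 1 :=
    (intervalIntegrable_iff_integrableOn_Ioc_of_le zero_le_one).2
      (integrableOn_deriv_of_nonneg hcont hderiv fun u hu => tail_nonneg hu.1 hu.2.le)
  rw [integral_eq_sub_of_hasDerivAt_of_le zero_le_one hcont hderiv hint]
  simp [tailPrimitive, tail, integral_neg_log_div_one_add]

end PiSqDivTwelve

/-- The iterated integral `∫₀¹ (∫_u^{(1+u)/2} (1/r)·log((1+u)/r − 1) dr) du`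
equals `π²/12`. -/
theorem iterated_integral_log_eq_pi_sq_div_twelve :
    ∫ u in (0:ℝ)..1, (∫ r in u..((1 + u) / 2), (1 / r) * Real.log ((1 + u) / r - 1))
      = Real.pi ^ 2 / 12 := by
  rw [← PiSqDivTwelve.integral_tail]
  refine integral_congr_ae (Eventually.of_forall fun u hu => ?_)
  rw [uIoc_of_le zero_le_one] at hu
  exact PiSqDivTwelve.integral_log_div_sub_one_eq_integral_kernel hu.1
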